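/- For every real y > 0 and every real x > 0, one has (1/2π)·∫_{−∞}^{∞} x^{−(2+it)}·exp((2+it)²·y) dt = (1/(2√(πy)))·exp(−(log x)²/(4y)). Equivalently, the contour integral (1/2πi)·∫_{2−i∞}^{2+i∞} x^{−s}·e^{s²y} ds equals (1/(2√(πy)))·e^{−(log x)²/(4y)}. -/

import Mathlib

open MeasureTheory Complex

/-!
On the line `Re s = c`, write `s = c + t i` and `L = log x`. Then `x^{-s} e^{s² y}` is the
exponential of the quadratic `-y t² + i (2cy - L) t + (c² y - cL)` in `t`, so the integral is a
Gaussian integral. Completing the square, the constant `c² y - cL + (2cy - L)²/(4y)` collapses to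
`-L²/(4y)`: the result does not depend on the abscissa `c`.
-/

lemma cpow_neg_mul_cexp_sq_vertical {x : ℝ} (hx : 0 < x) (c y t : ℝ) :
    (x : ℂ) ^ (-(c + (t : ℂ) * I)) * cexp ((c + (t : ℂ) * I) ^ 2 * y) =
      cexp (-(y : ℂ) * t ^ 2 + I * (2 * c * y - Real.log x) * t
        + (c ^ 2 * y - c * Real.log x)) := by
  have hx0 : (x : ℂ) ≠ 0 := by exact_mod_cast hx.ne'
  rw [cpow_def_of_ne_zero hx0, ← ofReal_log hx.le, ← Complex.exp_add]
  congr 1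
  ring_nf
  rw [I_sq]
  ring

lemma integral_vertical_cpow_neg_mul_cexp_sq {x y : ℝ} (hx : 0 < x) (hy : 0 < y) (c : ℝ) :
    ∫ t : ℝ, (x : ℂ) ^ (-(c + (t : ℂ) * I)) * cexp ((c + (t : ℂ) * I) ^ 2 * y) =
      ((√(Real.pi / y) * Real.exp (-(Real.log x) ^ 2 / (4 * y)) : ℝ) : ℂ) := by
  simp_rw [cpow_neg_mul_cexp_sq_vertical hx]
  rw [integral_cexp_quadratic (by simpa using hy), neg_neg]
  have hy0 : (y : ℂ) ≠ 0 := by exact_mod_cast hy.ne'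
  have hexponent : (c ^ 2 * y - c * Real.log x : ℂ)
      - (I * (2 * c * y - Real.log x)) ^ 2 / (4 * -(y : ℂ)) =
      ((-(Real.log x) ^ 2 / (4 * y) : ℝ) : ℂ) := by
    rw [mul_pow, I_sq]
    push_cast
    field_simp
    ring
  have hsqrt : ((Real.pi : ℂ) / y) ^ (1 / 2 : ℂ) = (√(Real.pi / y) : ℂ) := by
    rw [Real.sqrt_eq_rpow, ofReal_cpow (by positivity)]
    push_cast
    rfl
  rw [hexponent, hsqrt, ← ofReal_exp, ofReal_mul]

lemma one_div_two_pi_mul_sqrt_pi_div {y : ℝ} (hy : 0 < y) :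
    1 / (2 * Real.pi) * √(Real.pi / y) = 1 / (2 * √(Real.pi * y)) := by
  have hpi := Real.pi_pos
  rw [Real.sqrt_div hpi.le, Real.sqrt_mul hpi.le]
  have := Real.mul_self_sqrt hpi.le
  have : 0 < √Real.pi := Real.sqrt_pos.mpr hpi
  have : 0 < √y := Real.sqrt_pos.mpr hy
  field_simp
  linarith

/-- Gaussian contour integral: for `y > 0` and `x > 0`,
`(1/2π)·∫_{−∞}^{∞} x^{−(2+it)}·exp((2+it)²y) dt = (1/(2√(πy)))·exp(−(log x)²/(4y))`,
i.e. `(1/2πi)·∫_{(2)} x^{−s} e^{s²y} ds = (1/(2√(πy)))·e^{−(log x)²/(4y)}`. -/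
theorem stmt_17 (y x : ℝ) (hy : 0 < y) (hx : 0 < x) :
    (1 / (2 * (Real.pi : ℂ))) *
        ∫ t : ℝ, (x : ℂ) ^ (-(2 + (t : ℂ) * I)) * Complex.exp ((2 + (t : ℂ) * I) ^ 2 * (y : ℂ)) =
      ((1 / (2 * Real.sqrt (Real.pi * y)) *
          Real.exp (-(Real.log x) ^ 2 / (4 * y)) : ℝ) : ℂ) := by
  have h := integral_vertical_cpow_neg_mul_cexp_sq hx hy 2
  push_cast at h
  rw [h, ← one_div_two_pi_mul_sqrt_pi_div hy]
  push_cast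
  ring
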